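/- arXiv:1610.08353 — 2 statements merged into one kernel-verified Lean document; each statement's English description precedes it below -/
import Mathlib

section
/- If a > 0, b > 0 and a > c > b, then the quadratic form Q(z) = a(z₁² + z₄²) + b(z₂² + z₃²) + 2c(z₁z₄ − z₂z₃) is strictly positive on every nonzero 2×2 matrix of rank one, i.e., for all (ξ₁,ξ₂) ∈ ℝ² and (η₁,η₂) ∈ ℝ² both nonzero, Q(ξ₁η₁, ξ₁η₂, ξ₂η₁, ξ₂η₂) > 0. -/
/-- If a > 0, b > 0 and a > c > b, then Q is strictly positive on every
nonzero rank-one 2×2 matrix z = (ξ₁η₁, ξ₁η₂, ξ₂η₁, ξ₂η₂). -/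
theorem stmt_2 (a b c : ℝ) (ha : a > 0) (hb : b > 0) (hac : a > c) (hcb : c > b)
    (ξ₁ ξ₂ η₁ η₂ : ℝ) (hξ : (ξ₁, ξ₂) ≠ (0, 0)) (hη : (η₁, η₂) ≠ (0, 0)) :
    a * ((ξ₁ * η₁) ^ 2 + (ξ₂ * η₂) ^ 2) + b * ((ξ₁ * η₂) ^ 2 + (ξ₂ * η₁) ^ 2)
      + 2 * c * ((ξ₁ * η₁) * (ξ₂ * η₂) - (ξ₁ * η₂) * (ξ₂ * η₁)) > 0 := by
  have hc : (ξ₁ * η₁) * (ξ₂ * η₂) - (ξ₁ * η₂) * (ξ₂ * η₁) = 0 := by ring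
  rw [hc, mul_zero, add_zero]
  have hξ' : ξ₁ ≠ 0 ∨ ξ₂ ≠ 0 := by
    by_contra h; push_neg at h; exact hξ (by simp [h.1, h.2])
  have hη' : η₁ ≠ 0 ∨ η₂ ≠ 0 := by
    by_contra h; push_neg at h; exact hη (by simp [h.1, h.2])
  rcases hξ' with h1 | h1 <;> rcases hη' with h2 | h2 <;>
    nlinarith [sq_pos_of_ne_zero h1, sq_pos_of_ne_zero h2, sq_nonneg (ξ₁*η₁),
      sq_nonneg (ξ₁*η₂), sq_nonneg (ξ₂*η₁), sq_nonneg (ξ₂*η₂), sq_nonneg ξ₁, sq_nonneg ξ₂,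
      sq_nonneg η₁, sq_nonneg η₂, mul_pos (sq_pos_of_ne_zero h1) (sq_pos_of_ne_zero h2)]
end

section
/- Frozen-coefficient positivity via Plancherel (1D model of Van Hove's argument): let a_{ij,αβ} be constants satisfying the strong Hadamard–Legendre condition with constant ε > 0. Then for all Schwartz functions x : ℝⁿ → ℝ^ν, ∫ Σ a_{ij,αβ} ∂_i x^α ∂_j x^β dt ≥ ε ∫ |∇x|² dt, where |∇x|² = Σ_{i,α} (∂_i x^α)². -/
/-!
Complexify the components of `x` and put `P (i, α) = ∂ᵢ xᵅ`. Both sides are integrals of forms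
`Re (P* A P)` with a real matrix `A`, and Plancherel lets us integrate the same forms over the
Fourier transforms instead. There `𝓕 (∂ᵢ xᵅ) η = 2πi ηᵢ 𝓕 xᵅ η` is a rank-one tensor `η ⊗ ξ`, and
the Legendre–Hadamard condition holds for complex `ξ` too: splitting `ξ` into real and imaginary
parts splits the form into two copies of the real one.
-/

open MeasureTheory Finset
open SchwartzMap LineDeriv ComplexConjugate
open scoped FourierTransform

section Postcomp

variable {E F G : Type*} [NormedAddCommGroup E] [NormedSpace ℝ E]
  [NormedAddCommGroup F] [NormedSpace ℝ F] [NormedAddCommGroup G] [NormedSpace ℝ G]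

theorem SchwartzMap.lineDerivOp_postcompCLM (L : F →L[ℝ] G) (f : 𝓢(E, F)) (m : E) :
    ∂_{m} (postcompCLM L f) = postcompCLM L (∂_{m} f) := by
  ext t
  change fderiv ℝ (L ∘ f) t m = L (fderiv ℝ f t m)
  rw [(L.hasFDerivAt.comp t (f.hasFDerivAt t)).fderiv]
  rfl

end Postcomp

section ComplexValued

variable {V : Type*} [NormedAddCommGroup V] [InnerProductSpace ℝ V] [FiniteDimensional ℝ V]
  [MeasurableSpace V] [BorelSpace V]

theorem SchwartzMap.fourier_lineDerivOp_apply (f : 𝓢(V, ℂ)) (m η : V) :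
    𝓕 (∂_{m} f) η = 2 * Real.pi * Complex.I * inner ℝ η m * 𝓕 f η := by
  have : (inner ℝ · m).HasTemperateGrowth := by fun_prop
  simp [fourier_lineDerivOp_eq, this]
  ring

theorem SchwartzMap.integrable_conj_mul (f g : 𝓢(V, ℂ)) :
    Integrable fun t => conj (f t) * g t :=
  (pairing (ContinuousLinearMap.mul ℝ ℂ)
    (postcompCLM Complex.conjCLE.toContinuousLinearMap f) g).integrable

theorem SchwartzMap.integral_conj_fourier_mul_fourier (f g : 𝓢(V, ℂ)) :
    ∫ η, conj (𝓕 f η) * 𝓕 g η = ∫ t, conj (f t) * g t := by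
  simpa [mul_comm] using integral_inner_fourier_fourier f g

end ComplexValued

def reQuadForm {ι : Type*} [Fintype ι] (A : Matrix ι ι ℝ) (z : ι → ℂ) : ℝ :=
  ∑ k, ∑ l, A k l * (conj (z k) * z l).re

section ReQuadForm

variable {ι : Type*} [Fintype ι]

theorem reQuadForm_one [DecidableEq ι] (z : ι → ℂ) : reQuadForm 1 z = ∑ k, ‖z k‖ ^ 2 := by
  simp [reQuadForm, Matrix.one_apply, Complex.sq_norm, Complex.normSq_apply]

theorem reQuadForm_const_mul (A : Matrix ι ι ℝ) (c : ℂ) (z : ι → ℂ) :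
    reQuadForm A (fun k => c * z k) = ‖c‖ ^ 2 * reQuadForm A z := by
  simp only [reQuadForm, mul_sum, map_mul]
  refine sum_congr rfl fun k _ => sum_congr rfl fun l _ => ?_
  rw [show conj c * conj (z k) * (c * z l) = conj c * c * (conj (z k) * z l) by ring,
    Complex.conj_mul', ← Complex.ofReal_pow, Complex.re_ofReal_mul]
  ring

theorem reQuadForm_ofReal (A : Matrix ι ι ℝ) (r : ι → ℝ) :
    reQuadForm A (fun k => r k) = ∑ k, ∑ l, A k l * r k * r l := by
  simp [reQuadForm, ← Complex.ofReal_mul, mul_assoc]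

variable {V : Type*} [NormedAddCommGroup V] [InnerProductSpace ℝ V] [FiniteDimensional ℝ V]
  [MeasurableSpace V] [BorelSpace V]

theorem integrable_reQuadForm (A : Matrix ι ι ℝ) (P : ι → 𝓢(V, ℂ)) :
    Integrable fun t => reQuadForm A (fun k => P k t) :=
  integrable_finsetSum _ fun k _ => integrable_finsetSum _ fun l _ =>
    (integrable_conj_mul (P k) (P l)).re.const_mul _

theorem integral_reQuadForm_fourier (A : Matrix ι ι ℝ) (P : ι → 𝓢(V, ℂ)) :
    ∫ η, reQuadForm A (fun k => 𝓕 (P k) η) = ∫ t, reQuadForm A (fun k => P k t) := by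
  have integral_eq (Q : ι → 𝓢(V, ℂ)) : ∫ t, reQuadForm A (fun k => Q k t)
      = ∑ k, ∑ l, A k l * (∫ t, conj (Q k t) * Q l t).re := by
    have hQ k l := integrable_conj_mul (Q k) (Q l)
    have hterm k l : Integrable fun t => A k l * (conj (Q k t) * Q l t).re :=
      (hQ k l).re.const_mul _
    simp only [reQuadForm]
    rw [integral_finsetSum _ fun k _ => integrable_finsetSum _ fun l _ => hterm k l]
    refine sum_congr rfl fun k _ => ?_
    rw [integral_finsetSum _ fun l _ => hterm k l]
    refine sum_congr rfl fun l _ => ?_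
    rw [integral_const_mul]
    exact congrArg _ (integral_re (hQ k l))
  simp only [integral_eq, integral_conj_fourier_mul_fourier]

end ReQuadForm

theorem Fintype.sum_prod_sum_prod {ι κ M : Type*} [Fintype ι] [Fintype κ] [AddCommMonoid M]
    (f : ι × κ → ι × κ → M) : ∑ k, ∑ l, f k l = ∑ i, ∑ j, ∑ α, ∑ β, f (i, α) (j, β) := by
  simp only [Fintype.sum_prod_type]
  exact Finset.sum_congr rfl fun i _ => sum_comm

theorem le_reQuadForm_of_legendreHadamard {ι κ : Type*} [Fintype ι] [Fintype κ]
    [DecidableEq ι] [DecidableEq κ] (a : ι → ι → κ → κ → ℝ) (ε : ℝ)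
    (hell : ∀ (ξ : κ → ℝ) (η : ι → ℝ),
      ε * (∑ α, (ξ α) ^ 2) * (∑ i, (η i) ^ 2)
        ≤ ∑ i, ∑ j, ∑ α, ∑ β, a i j α β * ξ α * ξ β * η i * η j)
    (η : ι → ℝ) (ξ : κ → ℂ) :
    ε * reQuadForm 1 (fun k : ι × κ => η k.1 * ξ k.2)
      ≤ reQuadForm (Matrix.of fun k l => a k.1 l.1 k.2 l.2) (fun k : ι × κ => η k.1 * ξ k.2) := by
  have hre := hell (fun α => (ξ α).re) η
  have him := hell (fun α => (ξ α).im) η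
  have hone : reQuadForm 1 (fun k : ι × κ => η k.1 * ξ k.2)
      = (∑ α, (ξ α).re ^ 2) * (∑ i, η i ^ 2) + (∑ α, (ξ α).im ^ 2) * (∑ i, η i ^ 2) := by
    simp only [reQuadForm_one, Fintype.sum_prod_type, ← add_mul, ← sum_add_distrib, sum_mul,
      mul_sum]
    refine sum_congr rfl fun i _ => sum_congr rfl fun α _ => ?_
    rw [norm_mul, mul_pow, Complex.norm_real, Real.norm_eq_abs, sq_abs, Complex.sq_norm,
      Complex.normSq_apply]
    ring
  have hA : reQuadForm (Matrix.of fun k l => a k.1 l.1 k.2 l.2) (fun k : ι × κ => η k.1 * ξ k.2)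
      = (∑ i, ∑ j, ∑ α, ∑ β, a i j α β * (ξ α).re * (ξ β).re * η i * η j)
        + ∑ i, ∑ j, ∑ α, ∑ β, a i j α β * (ξ α).im * (ξ β).im * η i * η j := by
    simp only [reQuadForm, Fintype.sum_prod_sum_prod, ← sum_add_distrib]
    refine sum_congr rfl fun i _ => sum_congr rfl fun j _ =>
      sum_congr rfl fun α _ => sum_congr rfl fun β _ => ?_
    simp only [Matrix.of_apply, map_mul, Complex.conj_ofReal, Complex.mul_re, Complex.mul_im,
      Complex.ofReal_re, Complex.ofReal_im, Complex.conj_re, Complex.conj_im]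
    ring
  rw [hone, hA]
  linarith

theorem stmt_18_general (n ν : ℕ)
    (a : Fin n → Fin n → Fin ν → Fin ν → ℝ)
    (ε : ℝ)
    (hell : ∀ (ξ : Fin ν → ℝ) (η : Fin n → ℝ),
      ε * (∑ α, (ξ α) ^ 2) * (∑ i, (η i) ^ 2)
        ≤ ∑ i, ∑ j, ∑ α, ∑ β, a i j α β * ξ α * ξ β * η i * η j)
    (x : SchwartzMap (EuclideanSpace ℝ (Fin n)) (EuclideanSpace ℝ (Fin ν))) :
    ε * ∫ t : EuclideanSpace ℝ (Fin n),
        ∑ i, ∑ α, (fderiv ℝ (⇑x) t (EuclideanSpace.single i 1) α) ^ 2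
      ≤ ∫ t : EuclideanSpace ℝ (Fin n),
        ∑ i, ∑ j, ∑ α, ∑ β, a i j α β *
          (fderiv ℝ (⇑x) t (EuclideanSpace.single i 1) α) *
          (fderiv ℝ (⇑x) t (EuclideanSpace.single j 1) β) := by
  let u (α : Fin ν) : 𝓢(EuclideanSpace ℝ (Fin n), ℂ) :=
    postcompCLM (Complex.ofRealCLM ∘L EuclideanSpace.proj α) x
  let P (k : Fin n × Fin ν) := ∂_{EuclideanSpace.single k.1 (1 : ℝ)} (u k.2)
  have hP t k : P k t = (fderiv ℝ x t (EuclideanSpace.single k.1 1) k.2 : ℂ) := by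
    rw [show P k = _ from lineDerivOp_postcompCLM _ x _]
    rfl
  have hFP η k : 𝓕 (P k) η = 2 * Real.pi * Complex.I * (η k.1 * 𝓕 (u k.2) η) := by
    rw [fourier_lineDerivOp_apply, EuclideanSpace.inner_single_right]
    simp only [conj_trivial, one_mul]
    ring
  calc _ = ε * ∫ η, reQuadForm 1 (fun k => 𝓕 (P k) η) := by
        rw [integral_reQuadForm_fourier]
        simp only [reQuadForm_one, hP, Fintype.sum_prod_type, Complex.norm_real,
          Real.norm_eq_abs, sq_abs]
    _ ≤ ∫ η, reQuadForm (Matrix.of fun k l => a k.1 l.1 k.2 l.2) (fun k => 𝓕 (P k) η) := by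
        rw [← integral_const_mul]
        refine integral_mono ((integrable_reQuadForm 1 fun k => 𝓕 (P k)).const_mul ε)
          (integrable_reQuadForm _ fun k => 𝓕 (P k)) fun η => ?_
        simp only [hFP]
        rw [reQuadForm_const_mul, reQuadForm_const_mul, mul_left_comm ε]
        exact mul_le_mul_of_nonneg_left
          (le_reQuadForm_of_legendreHadamard a ε hell (fun i => η i) (fun α => 𝓕 (u α) η))
          (sq_nonneg _)
    _ = _ := by
        rw [integral_reQuadForm_fourier]
        simp only [hP, reQuadForm_ofReal, Fintype.sum_prod_sum_prod, Matrix.of_apply]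

/-- Frozen-coefficient positivity (Van Hove / Plancherel argument): if the constant
symmetric coefficients a satisfy the strong Hadamard–Legendre condition with ε > 0,
then for every Schwartz function x : ℝⁿ → ℝ^ν,
∫ Σ a_{ij,αβ} ∂_i x^α ∂_j x^β ≥ ε ∫ Σ (∂_i x^α)². -/
theorem stmt_18 (n ν : ℕ) (hn : 0 < n) (hν : 0 < ν)
    (a : Fin n → Fin n → Fin ν → Fin ν → ℝ)
    (hsymm : ∀ i j α β, a i j α β = a j i β α)
    (ε : ℝ) (hε : 0 < ε)
    (hell : ∀ (ξ : Fin ν → ℝ) (η : Fin n → ℝ),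
      ε * (∑ α, (ξ α) ^ 2) * (∑ i, (η i) ^ 2)
        ≤ ∑ i, ∑ j, ∑ α, ∑ β, a i j α β * ξ α * ξ β * η i * η j)
    (x : SchwartzMap (EuclideanSpace ℝ (Fin n)) (EuclideanSpace ℝ (Fin ν))) :
    ε * ∫ t : EuclideanSpace ℝ (Fin n),
        ∑ i, ∑ α, (fderiv ℝ (⇑x) t (EuclideanSpace.single i 1) α) ^ 2
      ≤ ∫ t : EuclideanSpace ℝ (Fin n),
        ∑ i, ∑ j, ∑ α, ∑ β, a i j α β *
          (fderiv ℝ (⇑x) t (EuclideanSpace.single i 1) α) *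
          (fderiv ℝ (⇑x) t (EuclideanSpace.single j 1) β) :=
  stmt_18_general n ν a ε hell x
end
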